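/- arXiv:2509.19383 — 6 statements merged into one kernel-verified Lean document; each statement's English description precedes it below -/
import Mathlib

section
/- Let X be a nonnegative random variable with CDF F (the Gamma(μ₀+1, scale φ₀) CDF) and let Y be an independent exponentially distributed random variable with mean Ω_I > 0. For j = 1,…,k define the random SINR γ_{k→j} = λ_q² β² X² ρ a_j / (β² X² ρ ϑ_j + d_sr^α β² M N_r Δ₁ + d_sr^α d_k^α (λ_q² + ε ρ Y)). Then the outage probability of user k, namely 1 − P(γ_{k→j} > γ_thj for all j = 1,…,k), equals ∫₀^∞ e^{−z} · F(√(φ* · d_sr^α · (β² M N_r Δ₁ + d_k^α (λ_q² + ε ρ Ω_I z)))) dz, where φ_j = γ_thj/(β² ρ (λ_q² a_j − γ_thj ϑ_j)) and φ* = max_{1≤j≤k} φ_j. -/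
open MeasureTheory ProbabilityTheory Topology Filter

/-- Lower incomplete gamma function `γ(s, x) = ∫₀ˣ t^{s-1} e^{-t} dt`. -/
noncomputable def lowerGamma (s x : ℝ) : ℝ := ∫ t in (0:ℝ)..x, t ^ (s - 1) * Real.exp (-t)

/-- `μ₀ = ((M+1)π² − 16)/(16 − π²)`. -/
noncomputable def mu0 (M : ℕ) : ℝ := (((M : ℝ) + 1) * Real.pi ^ 2 - 16) / (16 - Real.pi ^ 2)

/-- `φ₀ = (16 − π²)/(4π)`. -/
noncomputable def phi0 : ℝ := (16 - Real.pi ^ 2) / (4 * Real.pi)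

/-- The CDF of the Gamma distribution with shape `μ₀+1` and scale `φ₀`:
`F(x) = γ(μ₀+1, x/φ₀)/Γ(μ₀+1)`. -/
noncomputable def F (M : ℕ) (x : ℝ) : ℝ :=
  lowerGamma (mu0 M + 1) (x / phi0) / Real.Gamma (mu0 M + 1)

/-!
Because `λ_q² a_j > γ_thj ϑ_j`, the condition `γ_{k→j} > γ_thj` is equivalent to
`X² > φ_j N(Y)`, where `N(y) = d_sr^α (β² M N_r Δ₁ + d_k^α (λ_q² + ε ρ y)) > 0` is the effective
noise-plus-interference. Hence user `k` is in outage exactly when `X ≤ √(φ* N(Y))`. By independence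
this probability is the integral of the CDF of `X` against the exponential law of `Y`, and the
substitution `y = Ω_I z` normalises the exponential weight to `e^{-z}`.
-/

open Set

section Probability

variable {Ω : Type*} [MeasurableSpace Ω] {P : Measure Ω} [IsProbabilityMeasure P]

lemma measureReal_le_comp_eq_integral_cdf {X Y : Ω → ℝ} (hX : Measurable X) (hY : Measurable Y)
    (hXY : IndepFun X Y P) {g : ℝ → ℝ} (hg : Measurable g) :
    P.real {ω | X ω ≤ g (Y ω)} = ∫ y, cdf (P.map X) (g y) ∂(P.map Y) := by
  have : IsProbabilityMeasure (P.map X) := Measure.isProbabilityMeasure_map hX.aemeasurable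
  have hS : MeasurableSet {p : ℝ × ℝ | p.1 ≤ g p.2} :=
    measurableSet_le measurable_fst (hg.comp measurable_snd)
  have hjoint : P {ω | X ω ≤ g (Y ω)} = ∫⁻ y, P.map X (Iic (g y)) ∂(P.map Y) :=
    calc P {ω | X ω ≤ g (Y ω)} = P.map (fun ω => (X ω, Y ω)) {p | p.1 ≤ g p.2} := by
          rw [Measure.map_apply (hX.prodMk hY) hS]; rfl
      _ = ((P.map X).prod (P.map Y)) {p | p.1 ≤ g p.2} := by
          rw [hXY.map_prod_eq_prod_map_map hX.aemeasurable hY.aemeasurable]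
      _ = ∫⁻ y, P.map X (Iic (g y)) ∂(P.map Y) := Measure.prod_apply_symm hS
  have hmono : Monotone fun x => P.map X (Iic x) := fun _ _ h => measure_mono (Iic_subset_Iic.2 h)
  simp_rw [measureReal_def, hjoint, cdf_eq_real, measureReal_def]
  exact integral_toReal (hmono.measurable.comp hg).aemeasurable
    (ae_of_all _ fun _ => measure_lt_top _ _) |>.symm

lemma cdf_map_apply {X : Ω → ℝ} (hX : Measurable X) (x : ℝ) :
    cdf (P.map X) x = P.real {ω | X ω ≤ x} := by
  have := Measure.isProbabilityMeasure_map (μ := P) hX.aemeasurable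
  rw [cdf_eq_real, map_measureReal_apply hX measurableSet_Iic]
  rfl

lemma map_eq_expMeasure_of_cdf {Y : Ω → ℝ} (hY : Measurable Y) (hY_nonneg : ∀ ω, 0 ≤ Y ω)
    {r : ℝ} (hr : 0 < r) (hcdf : ∀ y, 0 ≤ y → P.real {ω | Y ω ≤ y} = 1 - Real.exp (-(r * y))) :
    P.map Y = expMeasure r := by
  have := Measure.isProbabilityMeasure_map (μ := P) hY.aemeasurable
  have := isProbabilityMeasure_expMeasure hr
  refine Measure.eq_of_cdf _ _ (StieltjesFunction.ext fun y => ?_)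
  rw [cdf_expMeasure_eq hr, cdf_map_apply hY]
  split_ifs with hy
  · exact hcdf y hy
  · rw [← measureReal_empty (μ := P)]
    congr 1
    exact eq_empty_of_forall_notMem fun ω hω => hy ((hY_nonneg ω).trans hω)

end Probability

lemma integral_expMeasure_eq_setIntegral_Ioi {r : ℝ} (hr : 0 < r) (h : ℝ → ℝ) :
    ∫ y, h y ∂(expMeasure r) = ∫ y in Ioi 0, r * Real.exp (-(r * y)) * h y := by
  rw [expMeasure, gammaMeasure, integral_withDensity_eq_integral_toReal_smul (f := gammaPDF 1 r)
    (measurable_gammaPDFReal 1 r).ennreal_ofReal (ae_of_all _ fun _ => ENNReal.ofReal_lt_top),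
    ← integral_Ici_eq_integral_Ioi,
    ← setIntegral_eq_integral_of_forall_compl_eq_zero (s := Ici 0)]
  · refine setIntegral_congr_fun measurableSet_Ici fun y (hy : 0 ≤ y) => ?_
    simp [gammaPDF, gammaPDFReal, hy, hr.le, Real.exp_nonneg]
  · intro y (hy : ¬ 0 ≤ y)
    simp [gammaPDF, gammaPDFReal, hy]

lemma integral_expMeasure_inv_eq {θ : ℝ} (hθ : 0 < θ) (h : ℝ → ℝ) :
    ∫ y, h y ∂(expMeasure θ⁻¹) = ∫ z in Ioi 0, Real.exp (-z) * h (θ * z) := by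
  have hsubst := integral_comp_mul_left_Ioi (fun y => Real.exp (-(θ⁻¹ * y)) * h y) 0 hθ
  simp only [mul_zero, inv_mul_cancel_left₀ hθ.ne', smul_eq_mul] at hsubst
  rw [integral_expMeasure_eq_setIntegral_Ioi (inv_pos.2 hθ), hsubst, ← integral_const_mul]
  simp only [mul_assoc]

lemma lt_sinr_iff {c s w θ γ N : ℝ} (hs : 0 < s) (hw : 0 ≤ w) (hθ : 0 ≤ θ) (hN : 0 < N)
    (hγ : γ * θ < c) :
    γ < c * s * w / (s * w * θ + N) ↔ γ / (s * (c - γ * θ)) < w / N := by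
  rw [lt_div_iff₀ (by positivity), div_lt_div_iff₀ (mul_pos hs (sub_pos.2 hγ)) hN]
  constructor <;> intro h <;> linarith

lemma sqrt_mul_lt_iff {P N x : ℝ} (hP : 0 ≤ P) (hN : 0 < N) (hx : 0 ≤ x) :
    √(P * N) < x ↔ P < x ^ 2 / N := by
  rw [lt_div_iff₀ hN, ← Real.sqrt_lt_sqrt_iff (x := P * N) (y := x ^ 2) (by positivity),
    Real.sqrt_sq hx]

theorem outage_probability_ARIS_NOMA_ipSIC_general
    {Ω : Type*} [MeasurableSpace Ω] (Pm : Measure Ω) [IsProbabilityMeasure Pm]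
    (M : ℕ) (hM : 0 < M)
    (X Y : Ω → ℝ) (hXm : Measurable X) (hYm : Measurable Y)
    (hXnn : ∀ ω, 0 ≤ X ω) (hYnn : ∀ ω, 0 ≤ Y ω)
    -- X has the Gamma(μ₀+1, scale φ₀) CDF F
    (hXcdf : ∀ x : ℝ, 0 ≤ x → (Pm {ω | X ω ≤ x}).toReal = F M x)
    -- Y is exponentially distributed with mean Ω_I
    (ΩI : ℝ) (hΩI : 0 < ΩI)
    (hYcdf : ∀ y : ℝ, 0 ≤ y → (Pm {ω | Y ω ≤ y}).toReal = 1 - Real.exp (-(y / ΩI)))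
    (hindep : IndepFun X Y Pm)
    (k : ℕ) (hk : 1 ≤ k)
    (lamq beta rho Nr Δ1 alpha dsr dk eps : ℝ)
    (a th gth : ℕ → ℝ)
    (hbeta : 0 < beta) (hrho : 0 < rho)
    (hNr : 0 < Nr) (hΔ1 : 0 < Δ1) (hdsr : 0 < dsr) (hdk : 0 < dk)
    (heps0 : 0 < eps)
    (hth : ∀ j ∈ Finset.Icc 1 k, 0 < th j)
    (hgth : ∀ j ∈ Finset.Icc 1 k, 0 < gth j)
    (hcond : ∀ j ∈ Finset.Icc 1 k, gth j * th j < lamq ^ 2 * a j) :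
    1 - (Pm {ω | ∀ j ∈ Finset.Icc 1 k,
          gth j < lamq ^ 2 * beta ^ 2 * (X ω) ^ 2 * rho * a j /
            (beta ^ 2 * (X ω) ^ 2 * rho * th j
              + dsr ^ alpha * beta ^ 2 * (M : ℝ) * Nr * Δ1
              + dsr ^ alpha * dk ^ alpha * (lamq ^ 2 + eps * rho * Y ω))}).toReal
      = ∫ z in Set.Ioi (0 : ℝ), Real.exp (-z) *
          F M (Real.sqrt
            ((Finset.Icc 1 k).sup' (Finset.nonempty_Icc.mpr hk)
                (fun j => gth j / (beta ^ 2 * rho * (lamq ^ 2 * a j - gth j * th j)))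
              * (dsr ^ alpha *
                  (beta ^ 2 * (M : ℝ) * Nr * Δ1
                    + dk ^ alpha * (lamq ^ 2 + eps * rho * ΩI * z))))) := by
  set φ := (Finset.Icc 1 k).sup' (Finset.nonempty_Icc.mpr hk)
    (fun j => gth j / (beta ^ 2 * rho * (lamq ^ 2 * a j - gth j * th j)))
  have hk_mem : k ∈ Finset.Icc 1 k := Finset.right_mem_Icc.2 hk
  have hφ : 0 ≤ φ := Finset.le_sup'_of_le _ hk_mem <|
    div_nonneg (hgth k hk_mem).le (mul_nonneg (by positivity) (sub_pos.2 (hcond k hk_mem)).le)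
  let N (y : ℝ) : ℝ :=
    dsr ^ alpha * (beta ^ 2 * (M : ℝ) * Nr * Δ1 + dk ^ alpha * (lamq ^ 2 + eps * rho * y))
  have hN {y : ℝ} (hy : 0 ≤ y) : 0 < N y := by positivity
  let g (y : ℝ) : ℝ := √(φ * N y)
  have hlawY : Pm.map Y = expMeasure ΩI⁻¹ := map_eq_expMeasure_of_cdf hYm hYnn (inv_pos.2 hΩI)
    fun y hy => (hYcdf y hy).trans (by rw [div_eq_inv_mul])
  trans Pm.real {ω | X ω ≤ g (Y ω)}
  · rw [← measureReal_def, ← sub_sub_cancel 1 (Pm.real {ω | X ω ≤ g (Y ω)}),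
      ← probReal_compl_eq_one_sub (measurableSet_le hXm (by fun_prop))]
    congr 3
    ext ω
    rw [notMem_ofPred_iff, not_le, sqrt_mul_lt_iff hφ (hN (hYnn ω)) (hXnn ω), Finset.sup'_lt_iff]
    refine forall₂_congr fun j hj => ?_
    convert lt_sinr_iff (c := lamq ^ 2 * a j) (s := beta ^ 2 * rho) (by positivity)
      (sq_nonneg (X ω)) (hth j hj).le (hN (hYnn ω)) (hcond j hj) using 2
    ring
  · rw [measureReal_le_comp_eq_integral_cdf hXm hYm hindep (by fun_prop), hlawY,
      integral_expMeasure_inv_eq hΩI]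
    refine setIntegral_congr_fun measurableSet_Ioi fun z _ => ?_
    rw [cdf_map_apply hXm, measureReal_def, hXcdf _ (Real.sqrt_nonneg _)]
    simp only [N, mul_assoc]

/-- **Theorem 1 (ARIS-NOMA, ipSIC)**: the outage probability of user `k` equals
`∫₀^∞ e^{−z} F(√(φ* d_sr^α (β² M N_r Δ₁ + d_k^α (λ_q² + ε ρ Ω_I z)))) dz`. -/
theorem outage_probability_ARIS_NOMA_ipSIC
    {Ω : Type*} [MeasurableSpace Ω] (Pm : Measure Ω) [IsProbabilityMeasure Pm]
    (M : ℕ) (hM : 0 < M)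
    (X Y : Ω → ℝ) (hXm : Measurable X) (hYm : Measurable Y)
    (hXnn : ∀ ω, 0 ≤ X ω) (hYnn : ∀ ω, 0 ≤ Y ω)
    -- X has the Gamma(μ₀+1, scale φ₀) CDF F
    (hXcdf : ∀ x : ℝ, 0 ≤ x → (Pm {ω | X ω ≤ x}).toReal = F M x)
    -- Y is exponentially distributed with mean Ω_I
    (ΩI : ℝ) (hΩI : 0 < ΩI)
    (hYcdf : ∀ y : ℝ, 0 ≤ y → (Pm {ω | Y ω ≤ y}).toReal = 1 - Real.exp (-(y / ΩI)))
    (hindep : IndepFun X Y Pm)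
    (k : ℕ) (hk : 1 ≤ k)
    (lamq beta rho Nr Δ1 alpha dsr dk eps : ℝ)
    (a th gth : ℕ → ℝ)
    (hlam0 : 0 < lamq) (hlam1 : lamq ≤ 1) (hbeta : 0 < beta) (hrho : 0 < rho)
    (hNr : 0 < Nr) (hΔ1 : 0 < Δ1) (halpha : 0 < alpha) (hdsr : 0 < dsr) (hdk : 0 < dk)
    (heps0 : 0 < eps) (heps1 : eps ≤ 1)
    (ha : ∀ j ∈ Finset.Icc 1 k, 0 < a j)
    (hth : ∀ j ∈ Finset.Icc 1 k, 0 < th j)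
    (hgth : ∀ j ∈ Finset.Icc 1 k, 0 < gth j)
    (hcond : ∀ j ∈ Finset.Icc 1 k, gth j * th j < lamq ^ 2 * a j) :
    1 - (Pm {ω | ∀ j ∈ Finset.Icc 1 k,
          gth j < lamq ^ 2 * beta ^ 2 * (X ω) ^ 2 * rho * a j /
            (beta ^ 2 * (X ω) ^ 2 * rho * th j
              + dsr ^ alpha * beta ^ 2 * (M : ℝ) * Nr * Δ1
              + dsr ^ alpha * dk ^ alpha * (lamq ^ 2 + eps * rho * Y ω))}).toReal
      = ∫ z in Set.Ioi (0 : ℝ), Real.exp (-z) *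
          F M (Real.sqrt
            ((Finset.Icc 1 k).sup' (Finset.nonempty_Icc.mpr hk)
                (fun j => gth j / (beta ^ 2 * rho * (lamq ^ 2 * a j - gth j * th j)))
              * (dsr ^ alpha *
                  (beta ^ 2 * (M : ℝ) * Nr * Δ1
                    + dk ^ alpha * (lamq ^ 2 + eps * rho * ΩI * z))))) :=
  outage_probability_ARIS_NOMA_ipSIC_general Pm M hM X Y hXm hYm hXnn hYnn hXcdf ΩI hΩI hYcdf hindep
    k hk lamq beta rho Nr Δ1 alpha dsr dk eps a th gth hbeta hrho hNr hΔ1 hdsr hdk heps0 hth hgth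
    hcond
end

section
/- Let X be a nonnegative random variable with CDF F (the Gamma(μ₀+1, scale φ₀) CDF). For j = 1,…,k define the (perfect-SIC, ε = 0) SINR γ_{k→j} = λ_q² β² X² ρ a_j / (β² X² ρ ϑ_j + d_sr^α β² M N_r Δ₁ + d_sr^α d_k^α λ_q²). Then the outage probability of user k, namely 1 − P(γ_{k→j} > γ_thj for all j = 1,…,k), equals F(√(φ* · d_sr^α · (β² M N_r Δ₁ + d_k^α λ_q²))), where φ_j = γ_thj/(β² ρ (λ_q² a_j − γ_thj ϑ_j)) and φ* = max_{1≤j≤k} φ_j. -/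
open MeasureTheory ProbabilityTheory Topology Filter

/-- **Corollary 1 (ARIS-NOMA, perfect SIC)**: the outage probability of user `k` equals
`F(√(φ* d_sr^α (β² M N_r Δ₁ + d_k^α λ_q²)))`. -/
theorem outage_probability_ARIS_NOMA_pSIC
    {Ω : Type*} [MeasurableSpace Ω] (Pm : Measure Ω) [IsProbabilityMeasure Pm]
    (M : ℕ) (hM : 0 < M)
    (X : Ω → ℝ) (hXm : Measurable X)
    (hXnn : ∀ ω, 0 ≤ X ω)
    -- X has the Gamma(μ₀+1, scale φ₀) CDF F
    (hXcdf : ∀ x : ℝ, 0 ≤ x → (Pm {ω | X ω ≤ x}).toReal = F M x)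
    (k : ℕ) (hk : 1 ≤ k)
    (lamq beta rho Nr Δ1 alpha dsr dk : ℝ)
    (a th gth : ℕ → ℝ)
    (hlam0 : 0 < lamq) (hlam1 : lamq ≤ 1) (hbeta : 0 < beta) (hrho : 0 < rho)
    (hNr : 0 < Nr) (hΔ1 : 0 < Δ1) (halpha : 0 < alpha) (hdsr : 0 < dsr) (hdk : 0 < dk)
    (ha : ∀ j ∈ Finset.Icc 1 k, 0 < a j)
    (hth : ∀ j ∈ Finset.Icc 1 k, 0 < th j)
    (hgth : ∀ j ∈ Finset.Icc 1 k, 0 < gth j)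
    (hcond : ∀ j ∈ Finset.Icc 1 k, gth j * th j < lamq ^ 2 * a j) :
    1 - (Pm {ω | ∀ j ∈ Finset.Icc 1 k,
          gth j < lamq ^ 2 * beta ^ 2 * (X ω) ^ 2 * rho * a j /
            (beta ^ 2 * (X ω) ^ 2 * rho * th j
              + dsr ^ alpha * beta ^ 2 * (M : ℝ) * Nr * Δ1
              + dsr ^ alpha * dk ^ alpha * lamq ^ 2)}).toReal
      = F M (Real.sqrt
          ((Finset.Icc 1 k).sup' (Finset.nonempty_Icc.mpr hk)
              (fun j => gth j / (beta ^ 2 * rho * (lamq ^ 2 * a j - gth j * th j)))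
            * (dsr ^ alpha *
                (beta ^ 2 * (M : ℝ) * Nr * Δ1 + dk ^ alpha * lamq ^ 2)))) := by

  have hne : (Finset.Icc 1 k).Nonempty := Finset.nonempty_Icc.mpr hk
  set φ : ℕ → ℝ := fun j => gth j / (beta ^ 2 * rho * (lamq ^ 2 * a j - gth j * th j)) with hφ
  set D : ℝ := dsr ^ alpha * (beta ^ 2 * (M : ℝ) * Nr * Δ1 + dk ^ alpha * lamq ^ 2) with hD
  have hdsra : (0:ℝ) < dsr ^ alpha := Real.rpow_pos_of_pos hdsr alpha
  have hdka : (0:ℝ) < dk ^ alpha := Real.rpow_pos_of_pos hdk alpha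
  have hM' : (0:ℝ) < (M:ℝ) := Nat.cast_pos.mpr hM
  have hDpos : 0 < D := by rw [hD]; positivity
  have hφpos : ∀ j ∈ Finset.Icc 1 k, 0 < φ j := by
    intro j hj
    have h1 := hgth j hj
    have h2 : 0 < lamq ^ 2 * a j - gth j * th j := sub_pos.mpr (hcond j hj)
    have h3 : 0 < beta ^ 2 * rho * (lamq ^ 2 * a j - gth j * th j) := by positivity
    exact div_pos h1 h3
  set c : ℝ := (Finset.Icc 1 k).sup' hne φ * D with hc
  have hkmem : k ∈ Finset.Icc 1 k := Finset.mem_Icc.mpr ⟨hk, le_refl k⟩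
  have hsuppos : 0 < (Finset.Icc 1 k).sup' hne φ :=
    lt_of_lt_of_le (hφpos k hkmem) (Finset.le_sup' φ hkmem)
  have hcpos : 0 < c := mul_pos hsuppos hDpos
  have hset : {ω | ∀ j ∈ Finset.Icc 1 k,
          gth j < lamq ^ 2 * beta ^ 2 * (X ω) ^ 2 * rho * a j /
            (beta ^ 2 * (X ω) ^ 2 * rho * th j
              + dsr ^ alpha * beta ^ 2 * (M : ℝ) * Nr * Δ1
              + dsr ^ alpha * dk ^ alpha * lamq ^ 2)}
      = {ω | Real.sqrt c < X ω} := by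
    ext ω
    simp only [Set.mem_setOf_eq]
    have hx0 : 0 ≤ X ω := hXnn ω
    have step1 : ∀ j ∈ Finset.Icc 1 k,
        (gth j < lamq ^ 2 * beta ^ 2 * (X ω) ^ 2 * rho * a j /
            (beta ^ 2 * (X ω) ^ 2 * rho * th j
              + dsr ^ alpha * beta ^ 2 * (M : ℝ) * Nr * Δ1
              + dsr ^ alpha * dk ^ alpha * lamq ^ 2) ↔ φ j < (X ω) ^ 2 / D) := by
      intro j hj
      have hthj := hth j hj
      have hgthj := hgth j hj
      have h2 : 0 < lamq ^ 2 * a j - gth j * th j := sub_pos.mpr (hcond j hj)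
      have hS : 0 < beta ^ 2 * rho * (lamq ^ 2 * a j - gth j * th j) := by positivity
      have hden : 0 < beta ^ 2 * (X ω) ^ 2 * rho * th j
              + dsr ^ alpha * beta ^ 2 * (M : ℝ) * Nr * Δ1
              + dsr ^ alpha * dk ^ alpha * lamq ^ 2 := by positivity
      rw [lt_div_iff₀ hden, hφ]
      simp only []
      rw [div_lt_div_iff₀ hS hDpos]
      have hid : gth j * (beta ^ 2 * (X ω) ^ 2 * rho * th j
              + dsr ^ alpha * beta ^ 2 * (M : ℝ) * Nr * Δ1
              + dsr ^ alpha * dk ^ alpha * lamq ^ 2)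
            - lamq ^ 2 * beta ^ 2 * (X ω) ^ 2 * rho * a j
          = gth j * D - (X ω) ^ 2 * (beta ^ 2 * rho * (lamq ^ 2 * a j - gth j * th j)) := by
        rw [hD]; ring
      constructor <;> intro h <;> linarith
    have h2 : (∀ j ∈ Finset.Icc 1 k,
        gth j < lamq ^ 2 * beta ^ 2 * (X ω) ^ 2 * rho * a j /
            (beta ^ 2 * (X ω) ^ 2 * rho * th j
              + dsr ^ alpha * beta ^ 2 * (M : ℝ) * Nr * Δ1
              + dsr ^ alpha * dk ^ alpha * lamq ^ 2))
        ↔ (Finset.Icc 1 k).sup' hne φ < (X ω) ^ 2 / D := by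
      rw [Finset.sup'_lt_iff]
      exact ⟨fun h j hj => (step1 j hj).mp (h j hj), fun h j hj => (step1 j hj).mpr (h j hj)⟩
    rw [h2, lt_div_iff₀ hDpos, ← hc]
    have h3 := Real.sqrt_lt_sqrt_iff (y := (X ω) ^ 2) hcpos.le
    rw [Real.sqrt_sq hx0] at h3
    exact h3.symm
  rw [hset]
  have hA : MeasurableSet {ω | Real.sqrt c < X ω} :=
    measurableSet_lt measurable_const hXm
  have hcompl : {ω | X ω ≤ Real.sqrt c} = {ω | Real.sqrt c < X ω}ᶜ := by
    ext ω; simp [not_lt]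
  have h1 : (Pm {ω | Real.sqrt c < X ω}ᶜ).toReal
      = 1 - (Pm {ω | Real.sqrt c < X ω}).toReal := by
    rw [measure_compl hA (measure_ne_top _ _), measure_univ,
      ENNReal.toReal_sub_of_le prob_le_one ENNReal.one_ne_top, ENNReal.toReal_one]
  rw [← h1, ← hcompl, hXcdf _ (Real.sqrt_nonneg _)]
end

section
/- Let X be a nonnegative random variable with CDF F (the Gamma(μ₀+1, scale φ₀) CDF). For j = 1,…,k define the (perfect-SIC, ε = 0) SINR γ_{k→j} = λ_q² X² ρ a_j / (X² ρ ϑ_j + d_sr^α d_k^α λ_q²). Then the outage probability of user k, namely 1 − P(γ_{k→j} > γ_thj for all j = 1,…,k), equals F(√(φ* · d_sr^α d_k^α λ_q²)), where φ_j = γ_thj/(ρ (λ_q² a_j − γ_thj ϑ_j)) and φ* = max_{1≤j≤k} φ_j. -/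
open MeasureTheory ProbabilityTheory Topology Filter

/-- **Corollary 2 (PRIS-NOMA, perfect SIC)**: the outage probability of user `k` equals
`F(√(φ* d_sr^α d_k^α λ_q²))`. -/
theorem outage_probability_PRIS_NOMA_pSIC
    {Ω : Type*} [MeasurableSpace Ω] (Pm : Measure Ω) [IsProbabilityMeasure Pm]
    (M : ℕ) (hM : 0 < M)
    (X : Ω → ℝ) (hXm : Measurable X)
    (hXnn : ∀ ω, 0 ≤ X ω)
    -- X has the Gamma(μ₀+1, scale φ₀) CDF F
    (hXcdf : ∀ x : ℝ, 0 ≤ x → (Pm {ω | X ω ≤ x}).toReal = F M x)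
    (k : ℕ) (hk : 1 ≤ k)
    (lamq rho alpha dsr dk : ℝ)
    (a th gth : ℕ → ℝ)
    (hlam0 : 0 < lamq) (hlam1 : lamq ≤ 1) (hrho : 0 < rho)
    (halpha : 0 < alpha) (hdsr : 0 < dsr) (hdk : 0 < dk)
    (ha : ∀ j ∈ Finset.Icc 1 k, 0 < a j)
    (hth : ∀ j ∈ Finset.Icc 1 k, 0 < th j)
    (hgth : ∀ j ∈ Finset.Icc 1 k, 0 < gth j)
    (hcond : ∀ j ∈ Finset.Icc 1 k, gth j * th j < lamq ^ 2 * a j) :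
    1 - (Pm {ω | ∀ j ∈ Finset.Icc 1 k,
          gth j < lamq ^ 2 * (X ω) ^ 2 * rho * a j /
            ((X ω) ^ 2 * rho * th j + dsr ^ alpha * dk ^ alpha * lamq ^ 2)}).toReal
      = F M (Real.sqrt
          ((Finset.Icc 1 k).sup' (Finset.nonempty_Icc.mpr hk)
              (fun j => gth j / (rho * (lamq ^ 2 * a j - gth j * th j)))
            * (dsr ^ alpha * dk ^ alpha * lamq ^ 2))) := by
  classical
  set c : ℝ := dsr ^ alpha * dk ^ alpha * lamq ^ 2 with hc_def
  have hc : 0 < c := by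
    have h1 : (0:ℝ) < dsr ^ alpha := Real.rpow_pos_of_pos hdsr _
    have h2 : (0:ℝ) < dk ^ alpha := Real.rpow_pos_of_pos hdk _
    positivity
  set φ : ℕ → ℝ := fun j => gth j / (rho * (lamq ^ 2 * a j - gth j * th j)) with hφ_def
  have hne : (Finset.Icc 1 k).Nonempty := Finset.nonempty_Icc.mpr hk
  have hφpos : ∀ j ∈ Finset.Icc 1 k, 0 < φ j := by
    intro j hj
    have hd : 0 < rho * (lamq ^ 2 * a j - gth j * th j) := by
      have := hcond j hj
      have : 0 < lamq ^ 2 * a j - gth j * th j := by linarith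
      positivity
    exact div_pos (hgth j hj) hd
  set S : ℝ := (Finset.Icc 1 k).sup' hne φ with hS_def
  have hSpos : 0 < S := by
    obtain ⟨j, hj⟩ := hne
    exact lt_of_lt_of_le (hφpos j hj) (Finset.le_sup' φ hj)
  have hScpos : 0 < S * c := mul_pos hSpos hc
  set s : ℝ := Real.sqrt (S * c) with hs_def
  have hsnn : 0 ≤ s := Real.sqrt_nonneg _
  -- set equality
  have hset : {ω | ∀ j ∈ Finset.Icc 1 k,
      gth j < lamq ^ 2 * (X ω) ^ 2 * rho * a j /
        ((X ω) ^ 2 * rho * th j + c)} = {ω | X ω ≤ s}ᶜ := by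
    ext ω
    simp only [Set.mem_setOf_eq, Set.mem_compl_iff, not_le]
    have key : ∀ j ∈ Finset.Icc 1 k,
        (gth j < lamq ^ 2 * (X ω) ^ 2 * rho * a j /
          ((X ω) ^ 2 * rho * th j + c)) ↔ φ j * c < (X ω) ^ 2 := by
      intro j hj
      have hthj := hth j hj
      have hD : 0 < (X ω) ^ 2 * rho * th j + c := by positivity
      have hd : 0 < rho * (lamq ^ 2 * a j - gth j * th j) := by
        have := hcond j hj
        have : 0 < lamq ^ 2 * a j - gth j * th j := by linarith
        positivity
      rw [lt_div_iff₀ hD, hφ_def]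
      rw [div_mul_eq_mul_div, div_lt_iff₀ hd]
      constructor <;> intro h <;> nlinarith
    have hiff1 : (∀ j ∈ Finset.Icc 1 k, φ j * c < (X ω) ^ 2) ↔ S * c < (X ω) ^ 2 := by
      rw [hS_def]
      rw [show (Finset.Icc 1 k).sup' hne φ * c < (X ω) ^ 2 ↔
          (Finset.Icc 1 k).sup' hne φ < (X ω) ^ 2 / c from (lt_div_iff₀ hc).symm]
      rw [Finset.sup'_lt_iff]
      exact forall₂_congr fun j hj => (lt_div_iff₀ hc).symm
    have hiff2 : S * c < (X ω) ^ 2 ↔ s < X ω := by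
      constructor
      · intro h
        have h0 : 0 ≤ S * c := le_of_lt hScpos
        have := Real.sqrt_lt_sqrt h0 h
        rwa [Real.sqrt_sq (hXnn ω)] at this
      · intro h
        have : s ^ 2 < (X ω) ^ 2 := by
          apply pow_lt_pow_left₀ h hsnn
          norm_num
        rwa [hs_def, Real.sq_sqrt (le_of_lt hScpos)] at this
    constructor
    · intro h
      exact hiff2.mp (hiff1.mp fun j hj => (key j hj).mp (h j hj))
    · intro h j hj
      exact (key j hj).mpr (hiff1.mpr (hiff2.mpr h) j hj)
  rw [hset]
  have hAm : MeasurableSet {ω | X ω ≤ s} := hXm measurableSet_Iic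
  have hcompl : Pm {ω | X ω ≤ s}ᶜ = 1 - Pm {ω | X ω ≤ s} :=
    prob_compl_eq_one_sub hAm
  have hle : Pm {ω | X ω ≤ s} ≤ 1 := prob_le_one
  rw [hcompl, ENNReal.toReal_sub_of_le hle ENNReal.one_ne_top, ENNReal.toReal_one]
  rw [hXcdf s hsnn]
  ring
end

section
/- Fix c* > 0 and define, for each transmit SNR ρ > 0, the ipSIC outage probability P(ρ) = ∫₀^∞ e^{−z} · F(√((c*/ρ) · d_sr^α · (β² M N_r Δ₁ + d_k^α (λ_q² + ε ρ Ω_I z)))) dz. Then as ρ → ∞, P(ρ) converges to the finite limit ∫₀^∞ e^{−z} · F(√(c* · d_sr^α d_k^α · ε Ω_I z)) dz. -/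
open MeasureTheory ProbabilityTheory Topology Filter

/-!
The integrand `e^{-z} F(√(u_ρ(z)))` is dominated by `e^{-z}`, since `F` is a CDF, and for each
fixed `z` the argument `u_ρ(z) = (c*/ρ)(p + q ρ)` tends to `c* q`; by continuity of `F` and
dominated convergence the integrals converge.
-/

lemma sixteen_sub_pi_sq_pos : (0 : ℝ) < 16 - Real.pi ^ 2 := by
  nlinarith [Real.pi_lt_d2, Real.pi_pos]

lemma phi0_pos : 0 < phi0 :=
  div_pos sixteen_sub_pi_sq_pos (by positivity)

lemma mu0_add_one_pos {M : ℕ} (hM : 0 < M) : 0 < mu0 M + 1 := by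
  have h16 := sixteen_sub_pi_sq_pos
  have hMR : (0 : ℝ) < M := by exact_mod_cast hM
  have h : mu0 M + 1 = (M : ℝ) * Real.pi ^ 2 / (16 - Real.pi ^ 2) := by
    unfold mu0
    field_simp
    ring
  rw [h]
  positivity

section LowerGamma

variable {s : ℝ}

lemma continuous_lowerGamma (hs : 0 < s) : Continuous (lowerGamma s) :=
  intervalIntegral.continuous_primitive (fun _ _ =>
    (intervalIntegral.intervalIntegrable_rpow' (by linarith)).mul_continuousOn
      (Real.continuous_exp.comp continuous_neg).continuousOn) 0

lemma lowerGamma_nonneg {x : ℝ} (hx : 0 ≤ x) : 0 ≤ lowerGamma s x :=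
  intervalIntegral.integral_nonneg hx fun _ ht =>
    mul_nonneg (Real.rpow_nonneg ht.1 _) (Real.exp_nonneg _)

lemma lowerGamma_le_Gamma (hs : 0 < s) {x : ℝ} (hx : 0 ≤ x) : lowerGamma s x ≤ Real.Gamma s := by
  rw [Real.Gamma_eq_integral hs, lowerGamma, intervalIntegral.integral_of_le hx]
  simp_rw [mul_comm (_ ^ (s - 1))]
  refine setIntegral_mono_set (Real.GammaIntegral_convergent hs) ?_
    Set.Ioc_subset_Ioi_self.eventuallyLE
  filter_upwards [ae_restrict_mem measurableSet_Ioi] with t ht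
  exact mul_nonneg (Real.exp_nonneg _) (Real.rpow_nonneg ht.le _)

end LowerGamma

section GammaCDF

variable {M : ℕ}

lemma continuous_F (hM : 0 < M) : Continuous (F M) :=
  ((continuous_lowerGamma (mu0_add_one_pos hM)).comp (continuous_id.div_const _)).div_const _

lemma F_mem_Icc (hM : 0 < M) {x : ℝ} (hx : 0 ≤ x) : F M x ∈ Set.Icc 0 1 := by
  have hs := mu0_add_one_pos hM
  have hy : 0 ≤ x / phi0 := div_nonneg hx phi0_pos.le
  have hΓ := Real.Gamma_pos_of_pos hs
  exact ⟨div_nonneg (lowerGamma_nonneg hy) hΓ.le,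
    (div_le_one hΓ).mpr (lowerGamma_le_Gamma hs hy)⟩

lemma abs_F_sqrt_le_one (hM : 0 < M) (x : ℝ) : |F M (Real.sqrt x)| ≤ 1 := by
  obtain ⟨h0, h1⟩ := F_mem_Icc hM (Real.sqrt_nonneg x)
  exact abs_le.mpr ⟨by linarith, h1⟩

end GammaCDF

lemma tendsto_setIntegral_exp_neg_mul_comp {ι : Type*} {l : Filter ι} [l.IsCountablyGenerated]
    {H : ℝ → ℝ} (hH : Continuous H) {C : ℝ} (hHC : ∀ x, |H x| ≤ C)
    {u : ι → ℝ → ℝ} {v : ℝ → ℝ} (hu : ∀ i, Measurable (u i))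
    (huv : ∀ z, Tendsto (fun i => u i z) l (𝓝 (v z))) :
    Tendsto (fun i => ∫ z in Set.Ioi 0, Real.exp (-z) * H (u i z)) l
      (𝓝 (∫ z in Set.Ioi 0, Real.exp (-z) * H (v z))) := by
  have hexp : IntegrableOn (fun z : ℝ => Real.exp (-z)) (Set.Ioi 0) := by
    simpa using exp_neg_integrableOn_Ioi 0 one_pos
  refine tendsto_integral_filter_of_dominated_convergence (fun z => C * Real.exp (-z))
    (Eventually.of_forall fun i => ?_) (Eventually.of_forall fun i => ae_of_all _ fun z => ?_)
    (hexp.const_mul C) (ae_of_all _ fun z => ?_)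
  · exact ((Real.continuous_exp.comp continuous_neg).measurable.mul
      (hH.measurable.comp (hu i))).aestronglyMeasurable
  · rw [norm_mul, Real.norm_eq_abs, Real.norm_eq_abs, abs_of_pos (Real.exp_pos _), mul_comm]
    exact mul_le_mul_of_nonneg_right (hHC _) (Real.exp_nonneg _)
  · exact tendsto_const_nhds.mul ((hH.tendsto _).comp (huv z))

lemma tendsto_div_mul_add_mul_self (c p q : ℝ) :
    Tendsto (fun ρ : ℝ => c / ρ * (p + q * ρ)) atTop (𝓝 (c * q)) := by
  have h : Tendsto (fun ρ : ℝ => c * p * ρ⁻¹ + c * q) atTop (𝓝 (c * q)) := by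
    simpa using (tendsto_inv_atTop_zero.const_mul (c * p)).add_const (c * q)
  refine h.congr' ?_
  filter_upwards [eventually_ne_atTop 0] with ρ hρ
  field_simp

theorem asymptotic_outage_ARIS_NOMA_ipSIC_general
    (M : ℕ) (hM : 0 < M)
    (c lamq beta Nr Δ1 alpha dsr dk eps ΩI : ℝ) :
    Filter.Tendsto
      (fun rho : ℝ => ∫ z in Set.Ioi (0 : ℝ), Real.exp (-z) *
        F M (Real.sqrt ((c / rho) * (dsr ^ alpha *
          (beta ^ 2 * (M : ℝ) * Nr * Δ1
            + dk ^ alpha * (lamq ^ 2 + eps * rho * ΩI * z))))))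
      Filter.atTop
      (𝓝 (∫ z in Set.Ioi (0 : ℝ), Real.exp (-z) *
        F M (Real.sqrt (c * dsr ^ alpha * dk ^ alpha * (eps * ΩI * z))))) := by
  refine tendsto_setIntegral_exp_neg_mul_comp (H := fun x => F M (Real.sqrt x))
    ((continuous_F hM).comp Real.continuous_sqrt) (abs_F_sqrt_le_one hM)
    (fun rho => by fun_prop) fun z => ?_
  have hlim := tendsto_div_mul_add_mul_self c
    (dsr ^ alpha * (beta ^ 2 * M * Nr * Δ1 + dk ^ alpha * lamq ^ 2))
    (dsr ^ alpha * dk ^ alpha * (eps * ΩI * z))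
  convert hlim using 2 <;> ring

/-- **Asymptotic OP (ARIS-NOMA, ipSIC)**: as `ρ → ∞`, the ipSIC outage probability
`P(ρ)` converges to `∫₀^∞ e^{−z} F(√(c* d_sr^α d_k^α ε Ω_I z)) dz`. -/
theorem asymptotic_outage_ARIS_NOMA_ipSIC
    (M : ℕ) (hM : 0 < M)
    (c lamq beta Nr Δ1 alpha dsr dk eps ΩI : ℝ)
    (hc : 0 < c) (hlam0 : 0 < lamq) (hlam1 : lamq ≤ 1) (hbeta : 0 < beta)
    (hNr : 0 < Nr) (hΔ1 : 0 < Δ1) (halpha : 0 < alpha) (hdsr : 0 < dsr) (hdk : 0 < dk)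
    (heps0 : 0 < eps) (heps1 : eps ≤ 1) (hΩI : 0 < ΩI) :
    Filter.Tendsto
      (fun rho : ℝ => ∫ z in Set.Ioi (0 : ℝ), Real.exp (-z) *
        F M (Real.sqrt ((c / rho) * (dsr ^ alpha *
          (beta ^ 2 * (M : ℝ) * Nr * Δ1
            + dk ^ alpha * (lamq ^ 2 + eps * rho * ΩI * z))))))
      Filter.atTop
      (𝓝 (∫ z in Set.Ioi (0 : ℝ), Real.exp (-z) *
        F M (Real.sqrt (c * dsr ^ alpha * dk ^ alpha * (eps * ΩI * z))))) :=
  asymptotic_outage_ARIS_NOMA_ipSIC_general M hM c lamq beta Nr Δ1 alpha dsr dk eps ΩI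
end

section
/- Fix c* > 0 and K = d_sr^α d_k^α λ_q² > 0, and define for each transmit SNR ρ > 0 the passive-RIS perfect-SIC outage probability P(ρ) = F(√(c* K / ρ)). Then lim_{ρ→∞} ρ^{(μ₀+1)/2} · P(ρ) = (c* K)^{(μ₀+1)/2} / (Γ(μ₀+2) · φ₀^{μ₀+1}). -/
open MeasureTheory ProbabilityTheory Topology Filter

/-!
Near the origin `e^{-t} ∈ [e^{-x}, 1]` on `[0, x]`, so `γ(s, x)` is squeezed between
`e^{-x} x^s / s` and `x^s / s`, whence `γ(s, x) ~ x^s / s` as `x → 0⁺`. Since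
`√(a/ρ) → 0⁺` as `ρ → ∞` and `ρ^{s/2} = a^{s/2} / √(a/ρ)^s`, this gives
`ρ^{s/2} F(√(a/ρ)) → a^{s/2} / (s Γ(s) φ^s) = a^{s/2} / (Γ(s+1) φ^s)`.
-/

section LowerGamma

variable {s x : ℝ}

lemma integral_rpow_sub_one (hs : 0 < s) : ∫ t in (0:ℝ)..x, t ^ (s - 1) = x ^ s / s := by
  rw [integral_rpow (Or.inl (by linarith)), sub_add_cancel, Real.zero_rpow hs.ne', sub_zero]

lemma intervalIntegrable_rpow_sub_one (hs : 0 < s) :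
    IntervalIntegrable (fun t : ℝ => t ^ (s - 1)) volume 0 x :=
  intervalIntegral.intervalIntegrable_rpow' (by linarith)

lemma intervalIntegrable_lowerGamma_integrand (hs : 0 < s) :
    IntervalIntegrable (fun t : ℝ => t ^ (s - 1) * Real.exp (-t)) volume 0 x :=
  (intervalIntegrable_rpow_sub_one hs).mul_continuousOn (by fun_prop)

lemma lowerGamma_zero_right (s : ℝ) : lowerGamma s 0 = 0 :=
  intervalIntegral.integral_same

lemma lowerGamma_le_rpow_div (hs : 0 < s) (hx : 0 ≤ x) : lowerGamma s x ≤ x ^ s / s := by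
  rw [← integral_rpow_sub_one hs]
  refine intervalIntegral.integral_mono_on hx (intervalIntegrable_lowerGamma_integrand hs)
    (intervalIntegrable_rpow_sub_one hs) fun t ht => ?_
  exact mul_le_of_le_one_right (Real.rpow_nonneg ht.1 _)
    (Real.exp_le_one_iff.mpr (neg_nonpos.mpr ht.1))

lemma exp_neg_mul_rpow_div_le_lowerGamma (hs : 0 < s) (hx : 0 ≤ x) :
    Real.exp (-x) * (x ^ s / s) ≤ lowerGamma s x := by
  rw [← integral_rpow_sub_one hs, ← intervalIntegral.integral_const_mul]
  refine intervalIntegral.integral_mono_on hx ((intervalIntegrable_rpow_sub_one hs).const_mul _)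
    (intervalIntegrable_lowerGamma_integrand hs) fun t ht => ?_
  rw [mul_comm]
  exact mul_le_mul_of_nonneg_left (Real.exp_le_exp.mpr (neg_le_neg ht.2))
    (Real.rpow_nonneg ht.1 _)

lemma tendsto_lowerGamma_div_rpow (hs : 0 < s) :
    Tendsto (fun x => lowerGamma s x / x ^ s) (𝓝[>] 0) (𝓝 (1 / s)) := by
  have hexp : Tendsto (fun x : ℝ => Real.exp (-x) * (1 / s)) (𝓝[>] 0) (𝓝 (1 / s)) := by
    have : Tendsto (fun x : ℝ => Real.exp (-x) * (1 / s)) (𝓝 0) (𝓝 (Real.exp (-0) * (1 / s))) :=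
      (by fun_prop : Continuous fun x : ℝ => Real.exp (-x) * (1 / s)).tendsto 0
    simpa using this.mono_left nhdsWithin_le_nhds
  refine tendsto_of_tendsto_of_tendsto_of_le_of_le' hexp tendsto_const_nhds ?_ ?_
  all_goals
    filter_upwards [self_mem_nhdsWithin] with x (hx : 0 < x)
    have hxs : 0 < x ^ s := Real.rpow_pos_of_pos hx s
  · have := exp_neg_mul_rpow_div_le_lowerGamma hs hx.le
    rw [le_div_iff₀ hxs]
    linarith [show Real.exp (-x) * (1 / s) * x ^ s = Real.exp (-x) * (x ^ s / s) by ring]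
  · rw [div_le_iff₀ hxs, one_div_mul_eq_div]
    exact lowerGamma_le_rpow_div hs hx.le

end LowerGamma

lemma rpow_div_two_eq_rpow_sqrt_div_mul {a ρ φ s : ℝ} (ha : 0 < a) (hρ : 0 < ρ) (hφ : 0 < φ) :
    ρ ^ (s / 2) = a ^ (s / 2) / ((√(a / ρ) / φ) ^ s * φ ^ s) := by
  rw [Real.div_rpow (Real.sqrt_nonneg _) hφ.le, div_mul_cancel₀ _ (by positivity),
    ← Real.rpow_div_two_eq_sqrt _ (by positivity), Real.div_rpow ha.le hρ.le,
    div_div_cancel₀ (by positivity)]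

theorem tendsto_rpow_mul_lowerGamma_sqrt_div {a s φ : ℝ} (ha : 0 ≤ a) (hs : 0 < s) (hφ : 0 < φ) :
    Tendsto (fun ρ : ℝ => ρ ^ (s / 2) * (lowerGamma s (√(a / ρ) / φ) / Real.Gamma s)) atTop
      (𝓝 (a ^ (s / 2) / (Real.Gamma (s + 1) * φ ^ s))) := by
  rcases ha.eq_or_lt with rfl | ha
  · simp [lowerGamma_zero_right, Real.zero_rpow (half_pos hs).ne']
  have hy : Tendsto (fun ρ => √(a / ρ) / φ) atTop (𝓝[>] 0) := by
    refine tendsto_nhdsWithin_of_tendsto_nhds_of_eventually_within _ ?_ ?_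
    · simpa using ((tendsto_const_nhds.div_atTop tendsto_id).sqrt).div_const φ
    · filter_upwards [eventually_gt_atTop 0] with ρ hρ
      exact div_pos (Real.sqrt_pos.mpr (div_pos ha hρ)) hφ
  have hlim := ((tendsto_lowerGamma_div_rpow hs).comp hy).mul_const
    (a ^ (s / 2) / (φ ^ s * Real.Gamma s))
  rw [Real.Gamma_add_one hs.ne']
  convert hlim.congr' ?_ using 2
  · field_simp
  · filter_upwards [eventually_gt_atTop 0] with ρ hρ
    have : 0 < (√(a / ρ) / φ) ^ s :=
      Real.rpow_pos_of_pos (div_pos (Real.sqrt_pos.mpr (div_pos ha hρ)) hφ) s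
    rw [Function.comp_apply, rpow_div_two_eq_rpow_sqrt_div_mul ha hρ hφ]
    field_simp

theorem asymptotic_outage_PRIS_NOMA_pSIC_general
    (M : ℕ) (hM : 0 < M)
    (c lamq alpha dsr dk : ℝ)
    (hc : 0 < c)
    (hdsr : 0 < dsr) (hdk : 0 < dk)
    (K : ℝ) (hK : K = dsr ^ alpha * dk ^ alpha * lamq ^ 2) :
    Filter.Tendsto
      (fun rho : ℝ => rho ^ ((mu0 M + 1) / 2) * F M (Real.sqrt (c * K / rho)))
      Filter.atTop
      (𝓝 ((c * K) ^ ((mu0 M + 1) / 2) /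
        (Real.Gamma (mu0 M + 2) * phi0 ^ (mu0 M + 1)))) := by
  have hK : 0 ≤ K := hK ▸ by positivity
  rw [show mu0 M + 2 = mu0 M + 1 + 1 by ring]
  exact tendsto_rpow_mul_lowerGamma_sqrt_div (by positivity) (mu0_add_one_pos hM) phi0_pos

/-- **Asymptotic OP (PRIS-NOMA, perfect SIC)**: with `K = d_sr^α d_k^α λ_q²` and
`P(ρ) = F(√(c* K/ρ))`,
`lim_{ρ→∞} ρ^{(μ₀+1)/2} P(ρ) = (c* K)^{(μ₀+1)/2} / (Γ(μ₀+2) φ₀^{μ₀+1})`. -/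
theorem asymptotic_outage_PRIS_NOMA_pSIC
    (M : ℕ) (hM : 0 < M)
    (c lamq alpha dsr dk : ℝ)
    (hc : 0 < c) (hlam0 : 0 < lamq) (hlam1 : lamq ≤ 1)
    (halpha : 0 < alpha) (hdsr : 0 < dsr) (hdk : 0 < dk)
    (K : ℝ) (hK : K = dsr ^ alpha * dk ^ alpha * lamq ^ 2) :
    Filter.Tendsto
      (fun rho : ℝ => rho ^ ((mu0 M + 1) / 2) * F M (Real.sqrt (c * K / rho)))
      Filter.atTop
      (𝓝 ((c * K) ^ ((mu0 M + 1) / 2) /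
        (Real.Gamma (mu0 M + 2) * phi0 ^ (mu0 M + 1)))) :=
  asymptotic_outage_PRIS_NOMA_pSIC_general M hM c lamq alpha dsr dk hc hdsr hdk K hK
end

section
/- For real numbers 0 < s < t and every x > 0, the regularized lower incomplete gamma function is strictly decreasing in the shape parameter: γ(t, x)/Γ(t) < γ(s, x)/Γ(s). Consequently, for a fixed argument, the Gamma-CDF-based outage probability F(x) = γ(μ₀+1, x/φ₀)/Γ(μ₀+1) decreases as the shape parameter μ₀+1 (and hence the number of reflecting elements M) increases. -/
open MeasureTheory Set Real

private lemma lowerGamma_eq_setIntegral (s x : ℝ) (hx : 0 ≤ x) :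
    lowerGamma s x = ∫ u in Ioc (0:ℝ) x, Real.exp (-u) * u ^ (s - 1) := by
  rw [lowerGamma, intervalIntegral.integral_of_le hx]
  exact setIntegral_congr_fun measurableSet_Ioc fun u _ => mul_comm _ _

private lemma kernel_setIntegral_pos {s : ℝ} (hs : 0 < s) (S : Set ℝ)
    (hS : MeasurableSet S) (hsub : S ⊆ Ioi 0) (hpos : 0 < volume S) :
    0 < ∫ u in S, Real.exp (-u) * u ^ (s - 1) := by
  rw [setIntegral_pos_iff_support_of_nonneg_ae]
  · rwa [inter_eq_right.mpr (fun u hu => Function.mem_support.mpr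
      (mul_ne_zero (Real.exp_pos _).ne' (Real.rpow_pos_of_pos (hsub hu) _).ne'))]
  · exact Filter.eventually_of_mem (self_mem_ae_restrict hS)
      fun u hu => (mul_pos (Real.exp_pos _) (Real.rpow_pos_of_pos (hsub hu) _)).le
  · exact (Real.GammaIntegral_convergent hs).mono_set hsub

/-- **Monotonicity of the regularized lower incomplete gamma function in shape**:
for `0 < s < t` and `x > 0`, `γ(t,x)/Γ(t) < γ(s,x)/Γ(s)`; hence the Gamma-CDF-based
outage probability decreases as the shape parameter (i.e. the number of reflecting
elements `M`) increases. -/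
theorem regularizedLowerGamma_strictAnti_shape
    (s t : ℝ) (hs : 0 < s) (hst : s < t) (x : ℝ) (hx : 0 < x) :
    lowerGamma t x / Real.Gamma t < lowerGamma s x / Real.Gamma s := by
  have ht : 0 < t := hs.trans hst
  set c : ℝ := t - s with hc_def
  have hc : 0 < c := by simp [hc_def]; linarith
  have hts : t - 1 = c + (s - 1) := by ring
  have hintS : IntegrableOn (fun u : ℝ => Real.exp (-u) * u ^ (s - 1)) (Ioi 0) :=
    Real.GammaIntegral_convergent hs
  have hintT : IntegrableOn (fun u : ℝ => Real.exp (-u) * u ^ (t - 1)) (Ioi 0) :=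
    Real.GammaIntegral_convergent ht
  have hIocS := hintS.mono_set (Ioc_subset_Ioi_self : Ioc (0:ℝ) x ⊆ _)
  have hIocT := hintT.mono_set (Ioc_subset_Ioi_self : Ioc (0:ℝ) x ⊆ _)
  have hIoiS := hintS.mono_set (Ioi_subset_Ioi hx.le)
  have hIoiT := hintT.mono_set (Ioi_subset_Ioi hx.le)
  set A : ℝ := ∫ u in Ioc (0:ℝ) x, Real.exp (-u) * u ^ (s - 1) with hA_def
  set B : ℝ := ∫ u in Ioc (0:ℝ) x, Real.exp (-u) * u ^ (t - 1) with hB_def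
  set Us : ℝ := ∫ u in Ioi x, Real.exp (-u) * u ^ (s - 1) with hUs_def
  set Ut : ℝ := ∫ u in Ioi x, Real.exp (-u) * u ^ (t - 1) with hUt_def
  -- Gamma decompositions
  have hsplit : ∀ r : ℝ, 0 < r → Real.Gamma r =
      (∫ u in Ioc (0:ℝ) x, Real.exp (-u) * u ^ (r - 1)) +
      ∫ u in Ioi x, Real.exp (-u) * u ^ (r - 1) := by
    intro r hr
    rw [Real.Gamma_eq_integral hr, ← Ioc_union_Ioi_eq_Ioi hx.le,
      setIntegral_union (Ioc_disjoint_Ioi le_rfl) measurableSet_Ioi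
        ((Real.GammaIntegral_convergent hr).mono_set Ioc_subset_Ioi_self)
        ((Real.GammaIntegral_convergent hr).mono_set (Ioi_subset_Ioi hx.le))]
  have hΓs := hsplit s hs
  have hΓt := hsplit t ht
  -- positivity
  have hApos : 0 < A :=
    kernel_setIntegral_pos hs _ measurableSet_Ioc Ioc_subset_Ioi_self
      (by simp [Real.volume_Ioc, hx])
  have hUspos : 0 < Us :=
    kernel_setIntegral_pos hs _ measurableSet_Ioi
      (Ioi_subset_Ioi hx.le) (by simp [Real.volume_Ioi])
  -- key strict inequality: B < x^c * A
  have hBlt : B < x ^ c * A := by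
    have hg_int : IntegrableOn
        (fun u : ℝ => x ^ c * (Real.exp (-u) * u ^ (s - 1)) - Real.exp (-u) * u ^ (t - 1))
        (Ioc (0:ℝ) x) := (hIocS.const_mul _).sub hIocT
    have hg_nonneg : ∀ u ∈ Ioc (0:ℝ) x,
        0 ≤ x ^ c * (Real.exp (-u) * u ^ (s - 1)) - Real.exp (-u) * u ^ (t - 1) := by
      intro u hu
      have h1 : u ^ (t - 1) = u ^ c * u ^ (s - 1) := by
        rw [hts, Real.rpow_add hu.1]
      have h2 : u ^ c ≤ x ^ c := Real.rpow_le_rpow hu.1.le hu.2 hc.le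
      have := mul_le_mul_of_nonneg_right h2 (Real.rpow_nonneg hu.1.le (s - 1))
      nlinarith [Real.exp_pos (-u), Real.rpow_nonneg hu.1.le (s-1)]
    have hg_pos : ∀ u ∈ Ioo (0:ℝ) x,
        0 < x ^ c * (Real.exp (-u) * u ^ (s - 1)) - Real.exp (-u) * u ^ (t - 1) := by
      intro u hu
      have h1 : u ^ (t - 1) = u ^ c * u ^ (s - 1) := by
        rw [hts, Real.rpow_add hu.1]
      have h2 : u ^ c < x ^ c := Real.rpow_lt_rpow hu.1.le hu.2 hc
      rw [h1]
      nlinarith [mul_pos (mul_pos (Real.exp_pos (-u)) (Real.rpow_pos_of_pos hu.1 (s-1)))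
        (sub_pos.mpr h2)]
    have hpos : 0 < ∫ u in Ioc (0:ℝ) x,
        (x ^ c * (Real.exp (-u) * u ^ (s - 1)) - Real.exp (-u) * u ^ (t - 1)) := by
      rw [setIntegral_pos_iff_support_of_nonneg_ae]
      · refine lt_of_lt_of_le ?_ (measure_mono (?_ :
          Ioo (0:ℝ) x ⊆ _ ∩ Ioc (0:ℝ) x))
        · simp [Real.volume_Ioo, hx]
        · intro u hu
          exact ⟨Function.mem_support.mpr (hg_pos u hu).ne', Ioo_subset_Ioc_self hu⟩
      · exact Filter.eventually_of_mem (self_mem_ae_restrict measurableSet_Ioc)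
          fun u hu => hg_nonneg u hu
      · exact hg_int
    rw [integral_sub (hIocS.const_mul _) hIocT, integral_const_mul] at hpos
    linarith
  -- tail inequality: x^c * Us ≤ Ut
  have hUle : x ^ c * Us ≤ Ut := by
    rw [hUs_def, ← integral_const_mul]
    refine setIntegral_mono_on (hIoiS.const_mul _) hIoiT measurableSet_Ioi ?_
    intro u hu
    have hu0 : 0 < u := hx.trans hu
    have h1 : u ^ (t - 1) = u ^ c * u ^ (s - 1) := by
      rw [hts, Real.rpow_add hu0]
    have h2 : x ^ c ≤ u ^ c := Real.rpow_le_rpow hx.le (le_of_lt hu) hc.le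
    have := mul_le_mul_of_nonneg_right h2 (Real.rpow_nonneg hu0.le (s - 1))
    nlinarith [Real.exp_pos (-u), Real.rpow_nonneg hu0.le (s-1)]
  -- assemble
  have hΓspos := Real.Gamma_pos_of_pos hs
  have hΓtpos := Real.Gamma_pos_of_pos ht
  rw [lowerGamma_eq_setIntegral s x hx.le, lowerGamma_eq_setIntegral t x hx.le,
    div_lt_div_iff₀ hΓtpos hΓspos, ← hA_def, ← hB_def]
  have key : B * Us < A * Ut :=
    calc B * Us < x ^ c * A * Us := by
          exact mul_lt_mul_of_pos_right hBlt hUspos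
      _ = A * (x ^ c * Us) := by ring
      _ ≤ A * Ut := mul_le_mul_of_nonneg_left hUle hApos.le
  rw [hΓs, hΓt]
  nlinarith [key]
end
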